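/- For all x > 0, 2(Φ(x) - 1/2)·(1 - x²) - 2x·φ(x) < 0. -/

import Mathlib

noncomputable def stdPhi (x : ℝ) : ℝ := (Real.sqrt (2 * Real.pi))⁻¹ * Real.exp (-x ^ 2 / 2)

noncomputable def stdCDF (x : ℝ) : ℝ := ∫ t in Set.Iic x, stdPhi t

lemma stdPhi_cont : Continuous stdPhi := by
  unfold stdPhi; fun_prop

lemma stdPhi_pos (x : ℝ) : 0 < stdPhi x := by
  unfold stdPhi
  have : 0 < Real.sqrt (2 * Real.pi) := Real.sqrt_pos.2 (by positivity)
  positivity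

lemma stdPhi_integrable : MeasureTheory.Integrable stdPhi := by
  have h := (integrable_exp_neg_mul_sq (by norm_num : (0:ℝ) < 1/2)).const_mul
    (Real.sqrt (2 * Real.pi))⁻¹
  convert h using 2 with t
  unfold stdPhi
  ring_nf

lemma stdCDF_eq (x : ℝ) : stdCDF x = stdCDF 0 + ∫ t in (0:ℝ)..x, stdPhi t := by
  rw [← intervalIntegral.integral_Iic_sub_Iic stdPhi_integrable.integrableOn
    stdPhi_integrable.integrableOn]
  unfold stdCDF; ring

lemma stdCDF_zero : stdCDF 0 = 1 / 2 := by
  have htot : ∫ t : ℝ, stdPhi t = 1 := by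
    have h : ∫ t : ℝ, Real.exp (-(1/2) * t ^ 2) = Real.sqrt (Real.pi / (1/2)) :=
      integral_gaussian (1/2)
    unfold stdPhi
    rw [MeasureTheory.integral_const_mul]
    have h2 : ∀ t : ℝ, Real.exp (-t ^ 2 / 2) = Real.exp (-(1/2) * t ^ 2) := by
      intro t; ring_nf
    simp_rw [h2, h]
    rw [inv_mul_eq_one₀ (by positivity)]
    congr 1
    ring
  have hsym : (∫ t in Set.Iic (0:ℝ), stdPhi t) = ∫ t in Set.Ioi (0:ℝ), stdPhi t := by
    rw [← neg_zero, ← integral_comp_neg_Iic, neg_zero]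
    congr 1
    ext t
    unfold stdPhi
    ring_nf
  have hsplit := intervalIntegral.integral_Iic_add_Ioi (b := (0:ℝ))
    stdPhi_integrable.integrableOn stdPhi_integrable.integrableOn
  unfold stdCDF
  rw [htot] at hsplit
  rw [← hsym] at hsplit
  linarith

lemma stdCDF_hasDerivAt (x : ℝ) : HasDerivAt stdCDF (stdPhi x) x := by
  have h : HasDerivAt (fun u => ∫ t in (0:ℝ)..u, stdPhi t) (stdPhi x) x :=
    intervalIntegral.integral_hasDerivAt_right
      stdPhi_integrable.intervalIntegrable
      stdPhi_cont.aestronglyMeasurable.stronglyMeasurableAtFilter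
      stdPhi_cont.continuousAt
  exact (h.const_add (stdCDF 0)).congr_of_eventuallyEq
    (Filter.Eventually.of_forall fun y => stdCDF_eq y)

lemma stdCDF_gt_zero (x : ℝ) (hx : 0 < x) : stdCDF 0 < stdCDF x := by
  rw [stdCDF_eq x]
  have : 0 < ∫ t in (0:ℝ)..x, stdPhi t :=
    intervalIntegral.intervalIntegral_pos_of_pos
      stdPhi_integrable.intervalIntegrable (fun t => stdPhi_pos t) hx
  linarith

theorem aux_neg (x : ℝ) (hx : 0 < x) :
    2 * (stdCDF x - 1 / 2) * (1 - x ^ 2) - 2 * x * stdPhi x < 0 := by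
  set g : ℝ → ℝ := fun y => (stdCDF y - 1 / 2) * (1 - y ^ 2) - y * stdPhi y with hg
  have hphi_deriv : ∀ y : ℝ, HasDerivAt stdPhi (-y * stdPhi y) y := by
    intro y
    unfold stdPhi
    have h1 : HasDerivAt (fun y : ℝ => -y ^ 2 / 2) (-y) y := by
      have := ((hasDerivAt_pow 2 y).neg).div_const 2
      exact this.congr_deriv (by simp; ring)
    have h2 := (h1.exp).const_mul (Real.sqrt (2 * Real.pi))⁻¹
    exact h2.congr_deriv (by ring)
  have hg_deriv : ∀ y : ℝ, HasDerivAt g (-2 * y * (stdCDF y - 1 / 2)) y := by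
    intro y
    have hq : HasDerivAt (fun y : ℝ => 1 - y ^ 2) (-(2 * y)) y := by
      have := (hasDerivAt_pow 2 y).const_sub 1
      exact this.congr_deriv (by norm_num)
    have h1 : HasDerivAt (fun y => (stdCDF y - 1 / 2) * (1 - y ^ 2))
        (stdPhi y * (1 - y ^ 2) + (stdCDF y - 1 / 2) * (-(2 * y))) y :=
      ((stdCDF_hasDerivAt y).sub_const _).mul hq
    have h2 : HasDerivAt (fun y => y * stdPhi y) (1 * stdPhi y + y * (-y * stdPhi y)) y :=
      (hasDerivAt_id y).mul (hphi_deriv y)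
    have := h1.sub h2
    exact this.congr_deriv (by ring)
  have hanti : StrictAntiOn g (Set.Ici (0:ℝ)) := by
    apply strictAntiOn_of_hasDerivWithinAt_neg (convex_Ici 0)
      (fun y _ => (hg_deriv y).continuousAt.continuousWithinAt)
      (fun y _ => ((hg_deriv y).hasDerivWithinAt))
    intro y hy
    rw [interior_Ici] at hy
    have hy' : (0:ℝ) < y := hy
    have h1 : 1 / 2 < stdCDF y := by
      have := stdCDF_gt_zero y hy
      rw [stdCDF_zero] at this
      exact this
    nlinarith
  have hlt : g x < g 0 := hanti (Set.self_mem_Ici) (Set.mem_Ici.2 hx.le) hx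
  have hg0 : g 0 = 0 := by
    simp [hg, stdCDF_zero]
  have := hlt
  rw [hg0] at this
  simp only [hg] at this
  nlinarith [this]
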